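/- For every integer b > 2, there exists a tree T with β(T) = b and τ(T) = 2. Specifically, the caterpillar L_{3n} obtained from the path P_n by attaching two leaves to each path vertex satisfies β(L_{3n}) = n and τ(L_{3n}) = 2. -/

import Mathlib

/-!
Ranking each spine vertex `v i` of `L_{3n}` by `i` and its leaves by `i + 1`, every vertex has at
most one lower neighbour, so the maximum of a cycle would have two: `L_{3n}` is a tree, and the
distance between distinct vertices is `|i - j|` plus one for each endpoint that is a leaf.

The two leaves at `v i` are twins, so every resolving set contains one of them, while the leaves
`(i, 0)` do resolve: `β(L_{3n}) = n`. Putting the spine in the middle row, `L_{3n}` spans the grid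
`P_n □ P_3`, which two corners of a long side resolve. Conversely, if `{w}` resolves a graph, the
neighbours of a vertex `c` have distance `d(w, c) ± 1` to `w` and pairwise distinct distances, so
`c` has at most two of them; `v 0` has three in every supergraph of `L_{3n}`, hence `τ = 2`.
-/

open SimpleGraph

/-- `W` is a resolving set for `G`: vertices with equal distance vectors to `W` are equal. -/
def IsResolvingSet {V : Type*} (G : SimpleGraph V) (W : Set V) : Prop :=
  ∀ u v : V, (∀ w ∈ W, G.dist w u = G.dist w v) → u = v

/-- The metric dimension of `G`: the least cardinality of a resolving set. -/
noncomputable def metricDim {V : Type*} [Fintype V] (G : SimpleGraph V) : ℕ :=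
  sInf {n | ∃ W : Finset V, W.card = n ∧ IsResolvingSet G ↑W}

/-- The threshold dimension of `G`: the least metric dimension over spanning supergraphs. -/
noncomputable def thresholdDim {V : Type*} [Fintype V] (G : SimpleGraph V) : ℕ :=
  sInf {n | ∃ H : SimpleGraph V, G ≤ H ∧ metricDim H = n}

/-- The strong product of `k` copies of the path on `{0, …, n-1}`. -/
def strongPow (n k : ℕ) : SimpleGraph (Fin k → Fin n) where
  Adj x y := x ≠ y ∧ ∀ i, ((x i : ℤ) - (y i : ℤ)).natAbs ≤ 1
  symm := by
    constructor
    rintro x y ⟨h1, h2⟩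
    refine ⟨fun h => h1 h.symm, fun i => ?_⟩
    rw [show (y i : ℤ) - (x i : ℤ) = -((x i : ℤ) - (y i : ℤ)) by ring, Int.natAbs_neg]
    exact h2 i
  loopless := ⟨fun x ⟨h, _⟩ => h rfl⟩

/-- The caterpillar `L_{3n}`: a path `v 0, …, v (n-1)` with two pendant leaves attached to
each path vertex. -/
def caterpillar (n : ℕ) : SimpleGraph (Fin n ⊕ Fin n × Fin 2) :=
  SimpleGraph.fromRel fun x y =>
    match x, y with
    | Sum.inl i, Sum.inl j => (i : ℕ) + 1 = (j : ℕ)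
    | Sum.inl i, Sum.inr p => i = p.1
    | _, _ => False

namespace SimpleGraph

variable {V V' : Type*} {G : SimpleGraph V} {G' : SimpleGraph V'}

theorem dist_eq_of_forall_adj_le_of_exists_adj (w : V) (f : V → ℕ) (hw : f w = 0)
    (hle : ∀ u v, G.Adj u v → f v ≤ f u + 1)
    (hdesc : ∀ v, v ≠ w → ∃ u, G.Adj u v ∧ f u + 1 = f v) (v : V) :
    G.Reachable w v ∧ G.dist w v = f v := by
  have hwalk : ∀ k v, f v = k → ∃ p : G.Walk w v, p.length = k := by
    intro k
    induction k with
    | zero =>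
      intro v hv
      obtain rfl : v = w := by
        by_contra hne
        obtain ⟨u, -, hu⟩ := hdesc v hne
        omega
      exact ⟨.nil, rfl⟩
    | succ k ih =>
      intro v hv
      obtain ⟨u, huv, hu⟩ := hdesc v (by rintro rfl; omega)
      obtain ⟨p, hp⟩ := ih u (by omega)
      exact ⟨p.concat huv, by simp [hp]⟩
  have hlength : ∀ {u v} (p : G.Walk u v), f v ≤ f u + p.length := by
    intro u v p
    induction p with
    | nil => simp
    | cons h _ ih => have := hle _ _ h; simp only [Walk.length_cons]; omega
  obtain ⟨p, hp⟩ := hwalk _ v rfl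
  obtain ⟨q, hq⟩ := p.reachable.exists_walk_length_eq_dist
  have := hlength q
  exact ⟨p.reachable, le_antisymm (hp ▸ dist_le p) (by omega)⟩

theorem edist_map_le (f : G →g G') (u v : V) : G'.edist (f u) (f v) ≤ G.edist u v := by
  by_cases h : G.Reachable u v
  · obtain ⟨p, hp⟩ := h.exists_walk_length_eq_edist
    exact hp ▸ (edist_le (p.map f)).trans_eq (by simp)
  · simp [edist_eq_top_of_not_reachable h]

theorem Iso.dist_eq (e : G ≃g G') (u v : V) : G'.dist (e u) (e v) = G.dist u v := by
  refine congrArg ENat.toNat (le_antisymm (edist_map_le e.toHom u v) ?_)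
  simpa using edist_map_le e.symm.toHom (e u) (e v)

theorem dist_boxProd {W : Type*} {H : SimpleGraph W} {x y : V × W}
    (h₁ : G.Reachable x.1 y.1) (h₂ : H.Reachable x.2 y.2) :
    (G □ H).dist x y = G.dist x.1 y.1 + H.dist x.2 y.2 := by
  rw [dist, edist_boxProd, ← h₁.coe_dist_eq_edist, ← h₂.coe_dist_eq_edist]
  rfl

theorem pathGraph_dist {n : ℕ} (i j : Fin n) : (pathGraph n).dist i j = Nat.dist i j := by
  refine (dist_eq_of_forall_adj_le_of_exists_adj i (fun v => Nat.dist i v) (by simp)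
    (fun u v huv => ?_) (fun v hv => ?_) j).2
  · rw [pathGraph_adj] at huv
    unfold Nat.dist
    omega
  · have hv : (v : ℕ) ≠ i := fun h => hv (Fin.ext h)
    by_cases hlt : (v : ℕ) < i
    · exact ⟨⟨v + 1, by omega⟩, by simp [pathGraph_adj], by unfold Nat.dist; simp; omega⟩
    · exact ⟨⟨v - 1, by omega⟩, by simp [pathGraph_adj]; omega, by unfold Nat.dist; simp; omega⟩

theorem IsAcyclic.of_unique_lower_neighbor (f : V → ℕ) (hne : ∀ u v, G.Adj u v → f u ≠ f v)
    (hlower : ∀ v x y, G.Adj x v → G.Adj y v → f x < f v → f y < f v → x = y) :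
    G.IsAcyclic := by
  classical
  intro v c hc
  obtain ⟨m, hm, hmax⟩ := c.support.toFinset.exists_max_image f ⟨v, by simp⟩
  rw [List.mem_toFinset] at hm
  have hc' := hc.rotate hm
  have hlt : ∀ x ∈ (c.rotate m hm).support, G.Adj x m → f x < f m := fun x hx hadj =>
    lt_of_le_of_ne (hmax x (by simpa using hx)) (hne _ _ hadj)
  have hsnd := (c.rotate m hm).adj_snd hc'.not_nil
  have hpen := (c.rotate m hm).adj_penultimate hc'.not_nil
  exact hc'.snd_ne_penultimate (hlower m _ _ hsnd.symm hpen
    (hlt _ (Walk.getVert_mem_support _ _) hsnd.symm) (hlt _ (Walk.getVert_mem_support _ _) hpen))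

end SimpleGraph

section MetricDimension

variable {V V' : Type*} {G : SimpleGraph V} {G' : SimpleGraph V'}

theorem IsResolvingSet.image_iso {S : Set V} (hS : IsResolvingSet G S) (e : G ≃g G') :
    IsResolvingSet G' (e '' S) := by
  intro u v huv
  refine e.symm.injective (hS _ _ fun w hw => ?_)
  have := huv (e w) ⟨w, hw, rfl⟩
  rwa [← e.symm.dist_eq, ← e.symm.dist_eq, e.symm_apply_apply] at this

theorem isResolvingSet_univ (hG : G.Preconnected) : IsResolvingSet G Set.univ :=
  fun u v huv => (hG u v).dist_eq_zero_iff.mp (by simpa using (huv u trivial).symm)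

theorem two_le_card_of_isResolvingSet {c a₁ a₂ a₃ : V} (h₁ : G.Adj c a₁) (h₂ : G.Adj c a₂)
    (h₃ : G.Adj c a₃) (h₁₂ : a₁ ≠ a₂) (h₁₃ : a₁ ≠ a₃) (h₂₃ : a₂ ≠ a₃) {W : Finset V}
    (hW : IsResolvingSet G ↑W) : 2 ≤ W.card := by
  by_contra! hcard
  have : Nonempty V := ⟨c⟩
  obtain ⟨w, hw⟩ := Finset.card_le_one_iff_subset_singleton.mp (Nat.le_of_lt_succ hcard)
  have hinj : ∀ u v, G.dist w u = G.dist w v → u = v := fun u v huv =>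
    hW u v fun x hx => by rw [Finset.mem_singleton.mp (hw hx)]; exact huv
  have := h₁.diff_dist_adj (u := w)
  have := h₂.diff_dist_adj (u := w)
  have := h₃.diff_dist_adj (u := w)
  have := mt (hinj a₁ c) h₁.ne.symm
  have := mt (hinj a₂ c) h₂.ne.symm
  have := mt (hinj a₃ c) h₃.ne.symm
  have := mt (hinj a₁ a₂) h₁₂
  have := mt (hinj a₁ a₃) h₁₃
  have := mt (hinj a₂ a₃) h₂₃
  omega

variable [Fintype V]

theorem metricDim_le {W : Finset V} (hW : IsResolvingSet G ↑W) : metricDim G ≤ W.card :=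
  Nat.sInf_le ⟨W, rfl, hW⟩

theorem metricDim_le_of_iso (e : G ≃g G') {W : Finset V'} (hW : IsResolvingSet G' ↑W) :
    metricDim G ≤ W.card := by
  simpa using metricDim_le (W := W.map e.symm.toEquiv.toEmbedding)
    (by simpa using hW.image_iso e.symm)

theorem le_metricDim (hG : G.Preconnected) {k : ℕ}
    (h : ∀ W : Finset V, IsResolvingSet G ↑W → k ≤ W.card) : k ≤ metricDim G :=
  le_csInf ⟨_, Finset.univ, rfl, by simpa using isResolvingSet_univ hG⟩
    (by rintro _ ⟨W, rfl, hW⟩; exact h W hW)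

theorem thresholdDim_le {H : SimpleGraph V} (h : G ≤ H) : thresholdDim G ≤ metricDim H :=
  Nat.sInf_le ⟨H, h, rfl⟩

theorem le_thresholdDim {k : ℕ} (h : ∀ H, G ≤ H → k ≤ metricDim H) : k ≤ thresholdDim G :=
  le_csInf ⟨_, G, le_rfl, rfl⟩ (by rintro _ ⟨H, hH, rfl⟩; exact h H hH)

end MetricDimension

theorem isResolvingSet_pathGraph_boxProd {m k : ℕ} (hm : 0 < m) (hk : 0 < k) :
    IsResolvingSet (pathGraph m □ pathGraph k)
      ↑({(⟨0, hm⟩, ⟨0, hk⟩), (⟨m - 1, by omega⟩, ⟨0, hk⟩)} : Finset (Fin m × Fin k)) := by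
  intro u v h
  have h₁ := h (⟨0, hm⟩, ⟨0, hk⟩) (by simp)
  have h₂ := h (⟨m - 1, by omega⟩, ⟨0, hk⟩) (by simp)
  simp only [dist_boxProd (pathGraph_preconnected _ _ _) (pathGraph_preconnected _ _ _),
    pathGraph_dist, Nat.dist] at h₁ h₂
  have := u.1.isLt
  have := v.1.isLt
  exact Prod.ext (Fin.ext (by omega)) (Fin.ext (by omega))

namespace Caterpillar

variable {n : ℕ}

def spine : Fin n ⊕ Fin n × Fin 2 → Fin n := Sum.elim id Prod.fst

def depth : Fin n ⊕ Fin n × Fin 2 → ℕ := Sum.elim (fun _ => 0) (fun _ => 1)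

@[simp] theorem spine_inl (i : Fin n) : spine (.inl i) = i := rfl

@[simp] theorem spine_inr (p : Fin n × Fin 2) : spine (.inr p) = p.1 := rfl

@[simp] theorem depth_inl (i : Fin n) : depth (.inl i : Fin n ⊕ Fin n × Fin 2) = 0 := rfl

@[simp] theorem depth_inr (p : Fin n × Fin 2) : depth (.inr p : Fin n ⊕ Fin n × Fin 2) = 1 := rfl

def gridCoord : Fin n ⊕ Fin n × Fin 2 → Fin n × Fin 3 :=
  Sum.elim (fun i => (i, 1)) (fun p => (p.1, ⟨2 * p.2, by omega⟩))

noncomputable def gridEquiv : (Fin n ⊕ Fin n × Fin 2) ≃ Fin n × Fin 3 :=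
  Equiv.ofBijective gridCoord <| (Fintype.bijective_iff_injective_and_card _).mpr
    ⟨by rintro (i | ⟨i, s⟩) (j | ⟨j, t⟩) h <;> simp [gridCoord, Fin.ext_iff] at h ⊢ <;> omega,
      by simp; ring⟩

@[simp] theorem gridEquiv_apply (v : Fin n ⊕ Fin n × Fin 2) : gridEquiv v = gridCoord v := rfl

end Caterpillar

section Caterpillar

open Caterpillar

variable {n : ℕ}

@[simp] theorem caterpillar_adj_inl_inl {i j : Fin n} :
    (caterpillar n).Adj (.inl i) (.inl j) ↔ (i : ℕ) + 1 = j ∨ (j : ℕ) + 1 = i := by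
  simp [caterpillar, Fin.ext_iff]
  omega

@[simp] theorem caterpillar_adj_inl_inr {i : Fin n} {p : Fin n × Fin 2} :
    (caterpillar n).Adj (.inl i) (.inr p) ↔ i = p.1 := by
  simp [caterpillar]

@[simp] theorem caterpillar_adj_inr_inl {i : Fin n} {p : Fin n × Fin 2} :
    (caterpillar n).Adj (.inr p) (.inl i) ↔ p.1 = i := by
  simp [caterpillar, eq_comm]

@[simp] theorem caterpillar_adj_inr_inr {p q : Fin n × Fin 2} :
    ¬ (caterpillar n).Adj (.inr p) (.inr q) := by
  simp [caterpillar]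

theorem caterpillar_reachable_and_dist (w v : Fin n ⊕ Fin n × Fin 2) :
    (caterpillar n).Reachable w v ∧ (caterpillar n).dist w v =
      if w = v then 0 else Nat.dist (spine w) (spine v) + depth w + depth v := by
  refine dist_eq_of_forall_adj_le_of_exists_adj w
    (fun v => if w = v then 0 else Nat.dist (spine w) (spine v) + depth w + depth v)
    (if_pos rfl) (fun x y hxy => ?_) (fun v hv => ?_) v
  · rcases x with i | p <;> rcases y with j | q <;> simp at hxy <;> rcases w with k | r <;>
      simp [Nat.dist, Fin.ext_iff, Prod.ext_iff] <;> (try split_ifs) <;> omega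
  rcases v with j | q
  · rcases lt_trichotomy (spine w : ℕ) j with hlt | heq | hgt
    · refine ⟨.inl ⟨j - 1, by omega⟩, by simp; omega, ?_⟩
      rcases w with k | r <;> simp [Nat.dist, Fin.ext_iff] at hlt ⊢ <;> (try split_ifs) <;> omega
    · rcases w with k | r
      · exact absurd (by simp_all [Fin.ext_iff]) hv
      · exact ⟨.inr r, by simp_all [Fin.ext_iff], by simp_all⟩
    · refine ⟨.inl ⟨j + 1, by have := (spine w).isLt; omega⟩, by simp, ?_⟩
      rcases w with k | r <;> simp [Nat.dist, Fin.ext_iff] at hgt ⊢ <;> (try split_ifs) <;> omega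
  · refine ⟨.inl q.1, by simp, ?_⟩
    rcases w with k | r <;> simp_all [Nat.dist, Fin.ext_iff, Prod.ext_iff]; omega

theorem caterpillar_dist (w v : Fin n ⊕ Fin n × Fin 2) : (caterpillar n).dist w v =
    if w = v then 0 else Nat.dist (spine w) (spine v) + depth w + depth v :=
  (caterpillar_reachable_and_dist w v).2

theorem caterpillar_preconnected : (caterpillar n).Preconnected :=
  fun w v => (caterpillar_reachable_and_dist w v).1

theorem caterpillar_isTree (hn : 0 < n) : (caterpillar n).IsTree := by
  have : Nonempty (Fin n ⊕ Fin n × Fin 2) := ⟨.inl ⟨0, hn⟩⟩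
  refine ⟨⟨caterpillar_preconnected⟩,
    IsAcyclic.of_unique_lower_neighbor (fun v => spine v + depth v) ?_ ?_⟩
  · rintro (i | p) (j | q) h <;> simp at h <;> simp [h]; omega
  · rintro (i | p) (j | q) (k | r) h₁ h₂ <;> simp at h₁ h₂ <;>
      simp [Fin.ext_iff, Prod.ext_iff] <;> omega

theorem isResolvingSet_caterpillar_leaves : IsResolvingSet (caterpillar n)
    ↑(Finset.univ.map ((Function.Embedding.sectL (Fin n) (0 : Fin 2)).trans
      (.inr : _ ↪ Fin n ⊕ _))) := by
  intro u v h
  have hu := h (.inr (spine u, 0)) (by simp)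
  have hv := h (.inr (spine v, 0)) (by simp)
  simp only [caterpillar_dist] at hu hv
  rcases u with i | ⟨i, s⟩ <;> rcases v with j | ⟨j, t⟩ <;>
    simp [Nat.dist, Fin.ext_iff, Prod.ext_iff] at hu hv ⊢ <;> (try split_ifs at hu hv) <;> grind

theorem card_le_of_isResolvingSet_caterpillar {W : Finset (Fin n ⊕ Fin n × Fin 2)}
    (hW : IsResolvingSet (caterpillar n) ↑W) : n ≤ W.card := by
  have hspine : ∀ i : Fin n, ∃ w ∈ W, spine w = i := by
    intro i
    by_contra! h
    have := hW (.inr (i, 0)) (.inr (i, 1)) fun w hw => by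
      have := h w hw
      simp only [caterpillar_dist]
      rcases w <;> simp_all [Prod.ext_iff]
    simp at this
  simpa using Finset.card_le_card_of_surjOn (t := Finset.univ) spine
    fun i _ => by simpa using hspine i

theorem metricDim_caterpillar : metricDim (caterpillar n) = n :=
  le_antisymm ((metricDim_le isResolvingSet_caterpillar_leaves).trans_eq (by simp))
    (le_metricDim caterpillar_preconnected fun _ => card_le_of_isResolvingSet_caterpillar)

theorem caterpillar_le_comap_grid :
    caterpillar n ≤ (pathGraph n □ pathGraph 3).comap gridEquiv := by
  rintro (i | ⟨i, s⟩) (j | ⟨j, t⟩) h <;> simp at h <;>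
    simp only [comap_adj, gridEquiv_apply, gridCoord, Sum.elim_inl, Sum.elim_inr, boxProd_adj,
      pathGraph_adj, Fin.ext_iff, Fin.val_one, h] <;> grind

theorem two_le_metricDim_of_caterpillar_le (hn : 2 ≤ n) {H : SimpleGraph (Fin n ⊕ Fin n × Fin 2)}
    (hH : caterpillar n ≤ H) : 2 ≤ metricDim H := by
  refine le_metricDim (caterpillar_preconnected.mono hH) fun W hW => ?_
  exact two_le_card_of_isResolvingSet (c := .inl ⟨0, by omega⟩) (a₁ := .inl ⟨1, hn⟩)
    (a₂ := .inr (⟨0, by omega⟩, 0)) (a₃ := .inr (⟨0, by omega⟩, 1)) (hH (by simp))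
    (hH (by simp)) (hH (by simp)) (by simp) (by simp) (by simp) hW

theorem thresholdDim_caterpillar (hn : 2 ≤ n) : thresholdDim (caterpillar n) = 2 := by
  refine le_antisymm ?_ (le_thresholdDim fun H hH => two_le_metricDim_of_caterpillar_le hn hH)
  calc thresholdDim (caterpillar n)
      ≤ metricDim ((pathGraph n □ pathGraph 3).comap gridEquiv) :=
        thresholdDim_le caterpillar_le_comap_grid
    _ ≤ 2 := (metricDim_le_of_iso (Iso.comap gridEquiv _)
        (isResolvingSet_pathGraph_boxProd (by omega) (by omega))).trans Finset.card_le_two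

end Caterpillar

/-- For every `b > 2` there is a tree with `β(T) = b` and `τ(T) = 2`; specifically the
caterpillar `L_{3n}` satisfies `β = n` and `τ = 2`. -/
theorem trees_large_dim_threshold_two :
    (∀ b : ℕ, 2 < b → ∃ (V : Type) (_ : Fintype V) (T : SimpleGraph V),
      T.IsTree ∧ metricDim T = b ∧ thresholdDim T = 2) ∧
    ∀ n : ℕ, 2 < n → (caterpillar n).IsTree ∧
      metricDim (caterpillar n) = n ∧ thresholdDim (caterpillar n) = 2 := by
  have hL : ∀ n : ℕ, 2 < n → (caterpillar n).IsTree ∧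
      metricDim (caterpillar n) = n ∧ thresholdDim (caterpillar n) = 2 := fun n hn =>
    ⟨caterpillar_isTree (by omega), metricDim_caterpillar, thresholdDim_caterpillar hn.le⟩
  exact ⟨fun b hb => ⟨_, inferInstance, caterpillar b, hL b hb⟩, hL⟩
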